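/- (Countable additivity for the measure game.) Let ε_n ≥ 0 for all n ∈ ω with ∑_n ε_n = ε < 1, and let A_n ⊆ 2^ω be sets such that player II has a winning strategy in the measure game G(ε_n, A_n) for every n. Then player II has a winning strategy in G(ε, A) where A = ⋂_n A_n. -/

import Mathlib

/-!
Player II plays all the games `G(εᵢ, Aᵢ)` at once, following a winning strategy `Tᵢ` in a
simulated run of the `i`-th game in which she chooses player I's moves herself. She keeps the
current values `Vᵢ` of the simulated games (initially rationals just above `εᵢ`) summing to less
than the current value of the main game. When I offers `(c₀, c₁)`, in each game she finds legal
splits of `Vᵢ` answered `0` and `1` by `Tᵢ` whose `0`-part and `1`-part add up to at most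
`Vᵢ + δᵢ`, by a discrete intermediate value argument on the interval of legal splits. Since
`∑ Vᵢ + ∑ δᵢ < c₀ + c₁`, for some bit `b` the `b`-parts sum to less than `c_b`, and she answers
`b` in every game. If all legal splits in some game get the same answer, the split putting
everything on the other side `b` is illegal, as `Tᵢ` never selects the value `0`; so `Vᵢ` is at
least the mass `M_b ≥ c_b` of the `b`-child, and `M_b` can stand in for the missing `b`-part.
If player I never breaks a rule, each simulated run is a legal run consistent with `Tᵢ` with the
same bits as the main run, so these bits lie in every `Aᵢ`.
-/

open MeasureTheory

namespace MeasureGame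

/-- Cantor space `2^ω`. -/
abbrev Cantor : Type := ℕ → Bool

/-- The basic cylinder set `N_t` determined by a finite binary string `t`. -/
def cyl (t : List Bool) : Set Cantor := {x | ∀ i : Fin t.length, x i.1 = t.get i}

/-- A round of the measure game: player I's pair of rationals, then player II's bit. -/
abbrev GRound : Type := (ℚ × ℚ) × Bool

/-- A strategy for player I in the measure game. -/
abbrev StratI : Type := List GRound → ℚ × ℚ

/-- A strategy for player II in the measure game. -/
abbrev StratII : Type := List GRound → ℚ × ℚ → Bool

/-- A run of the measure game. -/
abbrev Run : Type := ℕ → GRound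

/-- The history (list of completed rounds) before round `n`. -/
def hist (r : Run) (n : ℕ) : List GRound := (List.range n).map r

/-- Player II's bit at round `n`. -/
def bits (r : Run) (n : ℕ) : Bool := (r n).2

/-- The finite binary string of player II's first `n` bits. -/
def path (r : Run) (n : ℕ) : List Bool := (List.range n).map (bits r)

/-- The value player I assigned at round `n` to the one-bit extension of the current path by `b`. -/
def valI (r : Run) (n : ℕ) (b : Bool) : ℚ := if b then (r n).1.2 else (r n).1.1

/-- The value selected by player II's move at round `n`. -/
def sel (r : Run) (n : ℕ) : ℚ := valI r n (bits r n)

/-- Legality requirements on the single value player I assigned to `path r n ++ [b]`: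
it is nonnegative, at most `μ(N_{t⌢b})`, and strictly below it when the latter is positive. -/
def mOK (μ : Measure Cantor) (r : Run) (n : ℕ) (b : Bool) : Prop :=
  0 ≤ valI r n b ∧ ((valI r n b : ℝ) ≤ (μ (cyl (path r n ++ [b]))).toReal) ∧
    (0 < (μ (cyl (path r n ++ [b]))).toReal → (valI r n b : ℝ) < (μ (cyl (path r n ++ [b]))).toReal)

/-- Player I's move at round `n` of a run is legal (for the game `G(s, ·)`). -/
def IOK (μ : Measure Cantor) (s : ℝ) (r : Run) : ℕ → Prop
  | 0 => mOK μ r 0 false ∧ mOK μ r 0 true ∧ s < ((r 0).1.1 : ℝ) + ((r 0).1.2 : ℝ)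
  | (n + 1) => mOK μ r (n + 1) false ∧ mOK μ r (n + 1) true ∧
      (r (n + 1)).1.1 + (r (n + 1)).1.2 = sel r n

/-- Player II's move at round `n` of a run is legal: the selected value is nonzero. -/
def IIOK (r : Run) (n : ℕ) : Prop := sel r n ≠ 0

/-- The run `r` is consistent with player I's strategy `σ`. -/
def ConsI (σ : StratI) (r : Run) : Prop := ∀ n, (r n).1 = σ (hist r n)

/-- The run `r` is consistent with player II's strategy `τ`. -/
def ConsII (τ : StratII) (r : Run) : Prop := ∀ n, (r n).2 = τ (hist r n) (r n).1

/-- Player II wins the run `r` of `G(s, A)`: either player I is the first to break a rule,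
or all rules are followed and the sequence of II's bits belongs to `A`. -/
def IIWinsRun (μ : Measure Cantor) (s : ℝ) (A : Set Cantor) (r : Run) : Prop :=
  (∃ n, (∀ m < n, IOK μ s r m ∧ IIOK r m) ∧ ¬ IOK μ s r n) ∨
    ((∀ n, IOK μ s r n ∧ IIOK r n) ∧ bits r ∈ A)

/-- Player I has a winning strategy in the measure game `G(s, A)`. -/
def WinsI (μ : Measure Cantor) (s : ℝ) (A : Set Cantor) : Prop :=
  ∃ σ : StratI, ∀ r : Run, ConsI σ r → ¬ IIWinsRun μ s A r

/-- Player II has a winning strategy in the measure game `G(s, A)`. -/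
def WinsII (μ : Measure Cantor) (s : ℝ) (A : Set Cantor) : Prop :=
  ∃ τ : StratII, ∀ r : Run, ConsII τ r → IIWinsRun μ s A r

/-- The outer measure `μ*(A) = inf {μ(U) : U open, A ⊆ U}`. -/
noncomputable def outerM (μ : Measure Cantor) (A : Set Cantor) : ℝ :=
  sInf {v : ℝ | ∃ U : Set Cantor, IsOpen U ∧ A ⊆ U ∧ v = (μ U).toReal}

/-- The inner measure `μ_*(A) = sup {μ(F) : F closed, F ⊆ A}`. -/
noncomputable def innerM (μ : Measure Cantor) (A : Set Cantor) : ℝ :=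
  sSup {v : ℝ | ∃ F : Set Cantor, IsClosed F ∧ F ⊆ A ∧ v = (μ F).toReal}

def pick (b : Bool) (m : ℚ × ℚ) : ℚ := if b then m.2 else m.1

def LegalValue (M : ℝ) (q : ℚ) : Prop := 0 ≤ q ∧ (q : ℝ) ≤ M ∧ (0 < M → (q : ℝ) < M)

lemma legalValue_iff {M : ℝ} (hM : 0 ≤ M) {q : ℚ} :
    LegalValue M q ↔ 0 ≤ q ∧ (q = 0 ∨ (q : ℝ) < M) := by
  constructor
  · rintro ⟨hq, hqM, hlt⟩
    rcases hq.eq_or_lt with h | h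
    · exact ⟨hq, Or.inl h.symm⟩
    · exact ⟨hq, Or.inr (hlt ((Rat.cast_pos.2 h).trans_le hqM))⟩
  · rintro ⟨hq, rfl | h⟩
    · exact ⟨le_rfl, by simpa using hM, fun h => by simpa using h⟩
    · exact ⟨hq, h.le, fun _ => h⟩

lemma LegalValue.mono {M : ℝ} {q q' : ℚ} (h : LegalValue M q) (h0 : 0 ≤ q') (hle : q' ≤ q) :
    LegalValue M q' := by
  obtain ⟨-, hqM, hlt⟩ := h
  have hle' : (q' : ℝ) ≤ q := by exact_mod_cast hle
  exact ⟨h0, hle'.trans hqM, fun hM => hle'.trans_lt (hlt hM)⟩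

def IsLegalOffer (M : Bool → ℝ) (m : ℚ × ℚ) : Prop := ∀ b, LegalValue (M b) (pick b m)

lemma isLegalOffer_iff {M : Bool → ℝ} {m : ℚ × ℚ} :
    IsLegalOffer M m ↔ LegalValue (M false) m.1 ∧ LegalValue (M true) m.2 :=
  Bool.forall_bool

lemma isLegalOffer_swap {M : Bool → ℝ} {m : ℚ × ℚ} :
    IsLegalOffer (fun b => M !b) m.swap ↔ IsLegalOffer M m := by
  simp only [isLegalOffer_iff, Bool.not_false, Bool.not_true, Prod.fst_swap, Prod.snd_swap, and_comm]

lemma IsLegalOffer.of_between {M : Bool → ℝ} {v x y z : ℚ} (hx : IsLegalOffer M (x, v - x))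
    (hy : IsLegalOffer M (y, v - y)) (hxz : x ≤ z) (hzy : z ≤ y) : IsLegalOffer M (z, v - z) := by
  rw [isLegalOffer_iff] at hx hy ⊢
  exact ⟨hy.1.mono (hx.1.1.trans hxz) hzy, hx.2.mono (by linarith [hy.2.1]) (by linarith)⟩

lemma exists_eq_true_and_succ_eq_false {g : ℕ → Bool} {N : ℕ} (h0 : g 0 = true)
    (hN : g N = false) : ∃ k < N, g k = true ∧ g (k + 1) = false := by
  induction N with
  | zero => simp [h0] at hN
  | succ N ih =>
    cases hg : g N
    · obtain ⟨k, hk, h⟩ := ih hg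
      exact ⟨k, by omega, h⟩
    · exact ⟨N, by omega, hg, hN⟩

lemma exists_close_switch {s : Set ℚ} (hs : s.OrdConnected) (g : ℚ → Bool) {x y : ℚ}
    (hx : x ∈ s) (hy : y ∈ s) (hgx : g x = true) (hgy : g y = false) {δ : ℚ} (hδ : 0 < δ) :
    ∃ x' ∈ s, ∃ y' ∈ s, g x' = true ∧ g y' = false ∧ y' ≤ x' + δ := by
  rcases le_or_gt y x with hyx | hxy
  · exact ⟨x, hx, y, hy, hgx, hgy, by linarith⟩
  obtain ⟨N, hN⟩ := exists_nat_gt ((y - x) / δ)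
  have hN0 : (0 : ℚ) < N := (div_pos (sub_pos.2 hxy) hδ).trans hN
  have hstep : (y - x) / N ≤ δ := by
    rw [div_lt_iff₀ hδ] at hN
    rw [div_le_iff₀ hN0]
    linarith
  set p : ℕ → ℚ := fun k => x + k * ((y - x) / N) with hp
  have hpN : p N = y := by simp only [hp]; field_simp; ring
  have hps : ∀ k ≤ N, p k ∈ s := by
    intro k hk
    have hk' : (k : ℚ) ≤ N := by exact_mod_cast hk
    have hd : 0 ≤ (y - x) / N := (div_pos (sub_pos.2 hxy) hN0).le
    refine hs.out hx hy ⟨le_add_of_nonneg_right (mul_nonneg k.cast_nonneg hd), hpN ▸ ?_⟩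
    simp only [hp]
    gcongr
  obtain ⟨k, hk, hgk, hgk1⟩ := exists_eq_true_and_succ_eq_false (g := g ∘ p) (N := N)
    (by simpa [hp] using hgx) (by simpa [Function.comp, hpN] using hgy)
  refine ⟨p k, hps k hk.le, p (k + 1), hps (k + 1) hk, hgk, hgk1, ?_⟩
  simp only [hp]
  push_cast
  linarith

lemma exists_isLegalOffer_fst_le {M : Bool → ℝ} (hM : ∀ b, 0 ≤ M b) {v : ℚ} (hv : 0 ≤ v)
    (hvM : (v : ℝ) < M false + M true) (hnot : ¬ IsLegalOffer M (0, v)) {δ : ℝ} (hδ : 0 < δ) :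
    ∃ x : ℚ, IsLegalOffer M (x, v - x) ∧ (x : ℝ) ≤ v - M true + δ := by
  have hMv : M true ≤ v := by
    by_contra! h
    exact hnot (isLegalOffer_iff.2 ⟨(legalValue_iff (hM false)).2 ⟨le_rfl, Or.inl rfl⟩,
      (legalValue_iff (hM true)).2 ⟨hv, Or.inr h⟩⟩)
  obtain ⟨q, hq1, hq2⟩ := exists_rat_btwn
    (show (v : ℝ) - M true < min (M false) (v - M true + δ) from lt_min (by linarith) (by linarith))
  have hq0 : (0 : ℝ) < q := by linarith
  have hqv : ((min q v : ℚ) : ℝ) ≤ q := by exact_mod_cast min_le_left q v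
  refine ⟨min q v, isLegalOffer_iff.2 ⟨(legalValue_iff (hM false)).2 ⟨?_, Or.inr ?_⟩,
    (legalValue_iff (hM true)).2 ⟨sub_nonneg.2 (min_le_right _ _), ?_⟩⟩, ?_⟩
  · exact le_min (by exact_mod_cast hq0.le) hv
  · exact hqv.trans_lt (hq2.trans_le (min_le_left _ _))
  · rcases le_total q v with h | h
    · right
      rw [min_eq_left h]
      push_cast
      linarith
    · left
      rw [min_eq_right h, sub_self]
  · exact hqv.trans (hq2.le.trans (min_le_right _ _))

lemma exists_answer_values_of_mixed {M : Bool → ℝ} {v : ℚ} {f : ℚ × ℚ → Bool} {x₀ x₁ : ℚ}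
    (hx₀ : IsLegalOffer M (x₀, v - x₀)) (hf₀ : f (x₀, v - x₀) = false)
    (hx₁ : IsLegalOffer M (x₁, v - x₁)) (hf₁ : f (x₁, v - x₁) = true) {δ : ℝ} (hδ : 0 < δ) :
    ∃ a : Bool → ℝ, a false + a true ≤ v + δ ∧ ∀ b, a b = M b ∨
      ∃ x, IsLegalOffer M (x, v - x) ∧ f (x, v - x) = b ∧ a b = pick b (x, v - x) := by
  obtain ⟨δ', hδ'0, hδ'⟩ := exists_rat_btwn hδ
  obtain ⟨x, hx, y, hy, hgx, hgy, hyx⟩ :=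
    exists_close_switch (s := {x | IsLegalOffer M (x, v - x)})
      ⟨fun _ hx _ hy _ hz => IsLegalOffer.of_between hx hy hz.1 hz.2⟩
      (fun x => f (x, v - x)) hx₁ hx₀ hf₁ hf₀ (by exact_mod_cast hδ'0)
  refine ⟨fun b => pick b (y, v - x), ?_, fun b => Or.inr ?_⟩
  · have : (y : ℝ) ≤ x + δ' := by exact_mod_cast hyx
    simp only [pick]
    push_cast
    linarith
  · cases b
    · exact ⟨y, hy, hgy, rfl⟩
    · exact ⟨x, hx, hgx, rfl⟩

lemma exists_answer_values_of_forall_false {M : Bool → ℝ} (hM : ∀ b, 0 ≤ M b) {v : ℚ}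
    (hv : 0 ≤ v) (hvM : (v : ℝ) < M false + M true) {f : ℚ × ℚ → Bool}
    (hf : ∀ x, IsLegalOffer M (x, v - x) → pick (f (x, v - x)) (x, v - x) ≠ 0)
    (hall : ∀ x, IsLegalOffer M (x, v - x) → f (x, v - x) = false) {δ : ℝ} (hδ : 0 < δ) :
    ∃ a : Bool → ℝ, a false + a true ≤ v + δ ∧ ∀ b, a b = M b ∨
      ∃ x, IsLegalOffer M (x, v - x) ∧ f (x, v - x) = b ∧ a b = pick b (x, v - x) := by
  have hnot : ¬ IsLegalOffer M (0, v) := fun h => by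
    have h0 : IsLegalOffer M (0, v - 0) := by rwa [sub_zero]
    apply hf 0 h0
    rw [hall 0 h0]
    rfl
  obtain ⟨x, hx, hxle⟩ := exists_isLegalOffer_fst_le hM hv hvM hnot hδ
  refine ⟨fun b => if b then M true else (x : ℝ), by simpa using by linarith, fun b => ?_⟩
  cases b
  · exact Or.inr ⟨x, hx, hall x hx, rfl⟩
  · exact Or.inl rfl

lemma exists_answer_values_of_forall_true {M : Bool → ℝ} (hM : ∀ b, 0 ≤ M b) {v : ℚ}
    (hv : 0 ≤ v) (hvM : (v : ℝ) < M false + M true) {f : ℚ × ℚ → Bool}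
    (hf : ∀ x, IsLegalOffer M (x, v - x) → pick (f (x, v - x)) (x, v - x) ≠ 0)
    (hall : ∀ x, IsLegalOffer M (x, v - x) → f (x, v - x) = true) {δ : ℝ} (hδ : 0 < δ) :
    ∃ a : Bool → ℝ, a false + a true ≤ v + δ ∧ ∀ b, a b = M b ∨
      ∃ x, IsLegalOffer M (x, v - x) ∧ f (x, v - x) = b ∧ a b = pick b (x, v - x) := by
  have hnot : ¬ IsLegalOffer (fun b => M !b) (0, v) := fun h => by
    have hv' : IsLegalOffer M (v, v - v) := by rw [sub_self]; exact isLegalOffer_swap.1 h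
    apply hf v hv'
    rw [hall v hv', sub_self]
    rfl
  obtain ⟨x, hx, hxle⟩ := exists_isLegalOffer_fst_le (M := fun b => M !b) (fun b => hM _) hv
    (by simpa [add_comm] using hvM) hnot hδ
  replace hxle : (x : ℝ) ≤ v - M false + δ := hxle
  have hx' : IsLegalOffer M (v - x, v - (v - x)) := by
    rw [sub_sub_cancel]
    exact isLegalOffer_swap.1 hx
  refine ⟨fun b => if b then (x : ℝ) else M false, by simpa using by linarith, fun b => ?_⟩
  cases b
  · exact Or.inl rfl
  · exact Or.inr ⟨v - x, hx', hall _ hx', by simp [pick]⟩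

/-- `a b` is what player II gets in one game by answering `b`; when no legal offer is answered
`b`, the child mass `M b` stands in for it, a value too large to be chosen in
`exists_common_answer`. -/
lemma exists_answer_values {M : Bool → ℝ} (hM : ∀ b, 0 ≤ M b) {v : ℚ} (hv : 0 ≤ v)
    (hvM : (v : ℝ) < M false + M true) (f : ℚ × ℚ → Bool)
    (hf : ∀ x, IsLegalOffer M (x, v - x) → pick (f (x, v - x)) (x, v - x) ≠ 0)
    {δ : ℝ} (hδ : 0 < δ) :
    ∃ a : Bool → ℝ, a false + a true ≤ v + δ ∧ ∀ b, a b = M b ∨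
      ∃ x, IsLegalOffer M (x, v - x) ∧ f (x, v - x) = b ∧ a b = pick b (x, v - x) := by
  by_cases htrue : ∃ x, IsLegalOffer M (x, v - x) ∧ f (x, v - x) = true
  · by_cases hfalse : ∃ x, IsLegalOffer M (x, v - x) ∧ f (x, v - x) = false
    · obtain ⟨x₁, hx₁, hf₁⟩ := htrue
      obtain ⟨x₀, hx₀, hf₀⟩ := hfalse
      exact exists_answer_values_of_mixed hx₀ hf₀ hx₁ hf₁ hδ
    · refine exists_answer_values_of_forall_true hM hv hvM hf (fun x hx => ?_) hδ
      simpa using fun h => hfalse ⟨x, hx, h⟩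
  · refine exists_answer_values_of_forall_false hM hv hvM hf (fun x hx => ?_) hδ
    simpa using fun h => htrue ⟨x, hx, h⟩

lemma exists_common_answer {M : Bool → ℝ} (hM : ∀ b, 0 ≤ M b) {c : ℚ × ℚ}
    (hc : ∀ b, (pick b c : ℝ) ≤ M b) {V : ℕ → ℚ} (hV0 : ∀ i, 0 ≤ V i)
    (hVs : Summable fun i => (V i : ℝ)) (hVc : ∑' i, (V i : ℝ) < c.1 + c.2)
    (f : ℕ → ℚ × ℚ → Bool)
    (hf : ∀ i x, IsLegalOffer M (x, V i - x) → pick (f i (x, V i - x)) (x, V i - x) ≠ 0) :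
    ∃ b, ∃ X : ℕ → ℚ, (∀ i, IsLegalOffer M (X i, V i - X i) ∧ f i (X i, V i - X i) = b) ∧
      Summable (fun i => (pick b (X i, V i - X i) : ℝ)) ∧
      ∑' i, (pick b (X i, V i - X i) : ℝ) < pick b c := by
  obtain ⟨δ, hδ0, d, hδd, hdle⟩ :=
    posSumOfEncodable (show 0 < ((c.1 + c.2 : ℝ) - ∑' i, (V i : ℝ)) / 2 by linarith) ℕ
  have hVle : ∀ i, (V i : ℝ) ≤ ∑' j, (V j : ℝ) :=
    fun i => hVs.le_tsum i fun j _ => by exact_mod_cast hV0 j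
  have hcM : (c.1 : ℝ) + c.2 ≤ M false + M true := add_le_add (hc false) (hc true)
  choose a ha_sum ha using fun i =>
    exists_answer_values hM (hV0 i) ((hVle i).trans_lt (hVc.trans_le hcM)) (f i) (hf i) (hδ0 i)
  have ha0 : ∀ i b, 0 ≤ a i b := fun i b => by
    rcases ha i b with h | ⟨x, hx, -, h⟩
    · exact h ▸ hM b
    · rw [h]; exact_mod_cast (hx b).1
  have hsa : ∀ b, Summable fun i => a i b := fun b =>
    Summable.of_nonneg_of_le (fun i => ha0 i b)
      (fun i => by cases b <;> linarith [ha_sum i, ha0 i false, ha0 i true])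
      (hVs.add hδd.summable)
  obtain ⟨b, hb⟩ : ∃ b, ∑' i, a i b < pick b c := by
    by_contra! h
    have htot : ∑' i, (a i false + a i true) ≤ ∑' i, ((V i : ℝ) + δ i) :=
      (hsa false).add (hsa true) |>.tsum_le_tsum (fun i => ha_sum i) (hVs.add hδd.summable)
    rw [(hsa false).tsum_add (hsa true), hVs.tsum_add hδd.summable, hδd.tsum_eq] at htot
    have h0 : (c.1 : ℝ) ≤ ∑' i, a i false := h false
    have h1 : (c.2 : ℝ) ≤ ∑' i, a i true := h true
    linarith
  have hX : ∀ i, ∃ x, IsLegalOffer M (x, V i - x) ∧ f i (x, V i - x) = b ∧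
      a i b = pick b (x, V i - x) := fun i =>
    (ha i b).resolve_left fun h => by
      linarith [(hsa b).le_tsum i fun j _ => ha0 j b, hc b]
  choose X hX hXf hXa using hX
  have hXa' : (fun i => (pick b (X i, V i - X i) : ℝ)) = fun i => a i b :=
    funext fun i => (hXa i).symm
  exact ⟨b, X, fun i => ⟨hX i, hXf i⟩, hXa' ▸ hsa b, hXa' ▸ hb⟩

lemma exists_rat_gt_of_tsum_lt {ε : ℕ → ℝ} (hε0 : ∀ i, 0 ≤ ε i) (hε : Summable ε) {v : ℝ}
    (hv : ∑' i, ε i < v) :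
    ∃ V : ℕ → ℚ, (∀ i, ε i < V i) ∧ Summable (fun i => (V i : ℝ)) ∧ ∑' i, (V i : ℝ) < v := by
  obtain ⟨η, hη0, e, hηe, hev⟩ :=
    posSumOfEncodable (show 0 < (v - ∑' i, ε i) / 2 by linarith) ℕ
  choose V hV1 hV2 using fun i => exists_rat_btwn (show ε i < ε i + η i by linarith [hη0 i])
  have hVs : Summable fun i => (V i : ℝ) :=
    Summable.of_nonneg_of_le (fun i => (hε0 i).trans (hV1 i).le) (fun i => (hV2 i).le)
      (hε.add hηe.summable)
  refine ⟨V, hV1, hVs, ?_⟩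
  have hle := hVs.tsum_le_tsum (fun i => (hV2 i).le) (hε.add hηe.summable)
  rw [hε.tsum_add hηe.summable, hηe.tsum_eq] at hle
  linarith

lemma hist_succ (r : Run) (n : ℕ) : hist r (n + 1) = hist r n ++ [r n] := by
  simp [hist, List.range_succ]

def pathOf (h : List GRound) : List Bool := h.map Prod.snd

lemma pathOf_hist (r : Run) (n : ℕ) : pathOf (hist r n) = path r n := by
  simp [pathOf, hist, path, bits, Function.comp_def]

def childMass (μ : Measure Cantor) (t : List Bool) (b : Bool) : ℝ := (μ (cyl (t ++ [b]))).toReal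

def SumRule (s : ℝ) (h : List GRound) (m : ℚ × ℚ) : Prop :=
  match h.getLast? with
  | none => s < (m.1 : ℝ) + m.2
  | some g => m.1 + m.2 = pick g.2 g.1

lemma sumRule_concat {s : ℝ} {h : List GRound} {g : GRound} {m : ℚ × ℚ} :
    SumRule s (h ++ [g]) m ↔ m.1 + m.2 = pick g.2 g.1 := by
  simp [SumRule]

def IsLegalMove (μ : Measure Cantor) (s : ℝ) (h : List GRound) (m : ℚ × ℚ) : Prop :=
  IsLegalOffer (childMass μ (pathOf h)) m ∧ SumRule s h m

section Runs

variable {μ : Measure Cantor} {s : ℝ} {A : Set Cantor} {r : Run}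

lemma iok_iff_isLegalMove {n : ℕ} :
    IOK μ s r n ↔ IsLegalMove μ s (hist r n) (r n).1 := by
  rw [IsLegalMove, pathOf_hist, isLegalOffer_iff, and_assoc]
  cases n with
  | zero => exact Iff.rfl
  | succ n =>
    rw [hist_succ, sumRule_concat]
    exact Iff.rfl

lemma IIWinsRun.iiok (h : IIWinsRun μ s A r) {n : ℕ} (hI : ∀ k ≤ n, IOK μ s r k) :
    IIOK r n := by
  rcases h with ⟨N, hN, hfail⟩ | ⟨hall, -⟩
  · rcases lt_or_ge n N with h | h
    · exact (hN n h).2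
    · exact absurd (hI N h) hfail
  · exact (hall n).2

lemma IIWinsRun.mem_of_forall_iok (h : IIWinsRun μ s A r) (hI : ∀ n, IOK μ s r n) :
    bits r ∈ A := by
  rcases h with ⟨N, -, hfail⟩ | ⟨-, hA⟩
  · exact absurd (hI N) hfail
  · exact hA

lemma iiWinsRun_of_forall_iok (hII : ∀ n, (∀ k ≤ n, IOK μ s r k) → IIOK r n)
    (hA : (∀ n, IOK μ s r n) → bits r ∈ A) : IIWinsRun μ s A r := by
  by_cases hall : ∀ n, IOK μ s r n
  · exact Or.inr ⟨fun n => ⟨hall n, hII n fun k _ => hall k⟩, hA hall⟩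
  · classical
    push Not at hall
    have hbefore : ∀ k < Nat.find hall, IOK μ s r k := fun k hk => not_not.1 (Nat.find_min hall hk)
    exact Or.inl ⟨Nat.find hall, fun k hk =>
      ⟨hbefore k hk, hII k fun j hj => hbefore j (hj.trans_lt hk)⟩, Nat.find_spec hall⟩

def playHist (τ : StratII) (a : ℕ → ℚ × ℚ) : ℕ → List GRound
  | 0 => []
  | n + 1 => playHist τ a n ++ [(a n, τ (playHist τ a n) (a n))]

def play (τ : StratII) (a : ℕ → ℚ × ℚ) : Run := fun n => (a n, τ (playHist τ a n) (a n))

lemma hist_play (τ : StratII) (a : ℕ → ℚ × ℚ) (n : ℕ) : hist (play τ a) n = playHist τ a n := by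
  induction n with
  | zero => rfl
  | succ n ih => rw [hist_succ, ih]; rfl

lemma consII_play (τ : StratII) (a : ℕ → ℚ × ℚ) : ConsII τ (play τ a) :=
  fun n => by rw [hist_play]; rfl

/-- Selecting `0` loses the run however it continues, and `play` continues the position
consistently with `τ`. -/
lemma pick_ne_zero_of_winning {τ : StratII} (hτ : ∀ r, ConsII τ r → IIWinsRun μ s A r)
    {n : ℕ} (hcons : ∀ k < n, (r k).2 = τ (hist r k) (r k).1)
    (hI : ∀ k < n, IOK μ s r k) {m : ℚ × ℚ} (hm : IsLegalMove μ s (hist r n) m) :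
    pick (τ (hist r n) m) m ≠ 0 := by
  set r' := play τ fun k => if k < n then (r k).1 else m
  have hr' : ∀ k, r' k = (if k < n then (r k).1 else m, τ (hist r' k) _) := fun k => by
    rw [hist_play]; rfl
  have hhist : ∀ k ≤ n, hist r' k = hist r k := by
    intro k hk
    induction k with
    | zero => rfl
    | succ k ih =>
      rw [hist_succ, hist_succ, hr' k, ih (by omega), if_pos (by omega), ← hcons k (by omega)]
  have hr'n : r' n = (m, τ (hist r n) m) := by rw [hr' n, if_neg (lt_irrefl n), hhist n le_rfl]
  have hIOK : ∀ k ≤ n, IOK μ s r' k := by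
    intro k hk
    rw [iok_iff_isLegalMove, hhist k hk]
    rcases hk.lt_or_eq with hk | rfl
    · rw [hr' k, if_pos hk]
      exact iok_iff_isLegalMove.1 (hI k hk)
    · rwa [hr'n]
  have hII : pick (r' n).2 (r' n).1 ≠ 0 := (hτ r' (consII_play _ _)).iiok hIOK
  rwa [hr'n] at hII

end Runs

section Combined

variable (μ : Measure Cantor) (ε : ℕ → ℝ) (T : ℕ → StratII)

/-- `o.1` is II's common answer and `o.2 i` the offer she lets player I make in the `i`-th
simulated game, whose history is `S i`. -/
def RoundSpec (S : ℕ → List GRound) (c : ℚ × ℚ) (o : Bool × (ℕ → ℚ × ℚ)) : Prop :=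
  (∀ i, IsLegalMove μ (ε i) (S i) (o.2 i) ∧ T i (S i) (o.2 i) = o.1) ∧
    Summable (fun i => (pick o.1 (o.2 i) : ℝ)) ∧ ∑' i, (pick o.1 (o.2 i) : ℝ) < pick o.1 c

noncomputable def roundChoice (S : ℕ → List GRound) (c : ℚ × ℚ) : Bool × (ℕ → ℚ × ℚ) :=
  Classical.epsilon (RoundSpec μ ε T S c)

/-- A strategy sees only the history, so the simulated histories are recomputed from it by
replaying `roundChoice`. -/
noncomputable def simHist (h : List GRound) : ℕ → List GRound :=
  h.foldl (fun S g i => S i ++ [((roundChoice μ ε T S g.1).2 i, g.2)]) fun _ => []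

noncomputable def combinedStrat : StratII :=
  fun h c => (roundChoice μ ε T (simHist μ ε T h) c).1

noncomputable def simRun (r : Run) (i : ℕ) : Run :=
  fun k => ((roundChoice μ ε T (simHist μ ε T (hist r k)) (r k).1).2 i, (r k).2)

def RoundSpecAt (r : Run) (n : ℕ) : Prop :=
  RoundSpec μ ε T (simHist μ ε T (hist r n)) (r n).1
    (roundChoice μ ε T (simHist μ ε T (hist r n)) (r n).1)

variable {μ ε T} {r : Run}

lemma hist_simRun (i n : ℕ) : hist (simRun μ ε T r i) n = simHist μ ε T (hist r n) i := by
  induction n with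
  | zero => rfl
  | succ n ih => rw [hist_succ, hist_succ, ih, simHist, simHist, List.foldl_concat]; rfl

lemma pathOf_simHist (i n : ℕ) : pathOf (simHist μ ε T (hist r n) i) = path r n := by
  rw [← hist_simRun, pathOf_hist]
  rfl

lemma roundChoice_fst (hr : ConsII (combinedStrat μ ε T) r) (n : ℕ) :
    (roundChoice μ ε T (simHist μ ε T (hist r n)) (r n).1).1 = (r n).2 :=
  (hr n).symm

lemma RoundSpecAt.iok_simRun {n : ℕ} (h : RoundSpecAt μ ε T r n) (i : ℕ) :
    IOK μ (ε i) (simRun μ ε T r i) n := by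
  rw [iok_iff_isLegalMove, hist_simRun]
  exact (h.1 i).1

lemma RoundSpecAt.consII_simRun (hr : ConsII (combinedStrat μ ε T) r) {n : ℕ}
    (h : RoundSpecAt μ ε T r n) (i : ℕ) :
    (simRun μ ε T r i n).2 = T i (hist (simRun μ ε T r i) n) (simRun μ ε T r i n).1 := by
  rw [hist_simRun]
  exact (hr n).trans (h.1 i).2.symm

lemma RoundSpecAt.iiok (hr : ConsII (combinedStrat μ ε T) r) {n : ℕ}
    (h : RoundSpecAt μ ε T r n) : IIOK r n := by
  obtain ⟨hmoves, -, hlt⟩ := h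
  rw [roundChoice_fst hr] at hlt
  have hnonneg : (0 : ℝ) ≤ ∑' i, (pick (r n).2 ((roundChoice μ ε T _ _).2 i) : ℝ) :=
    tsum_nonneg fun i => by exact_mod_cast ((hmoves i).1.1 _).1
  exact_mod_cast (hnonneg.trans_lt hlt).ne'

lemma exists_simValues (hr : ConsII (combinedStrat μ ε T) r) (hε0 : ∀ i, 0 ≤ ε i)
    (hsum : Summable ε) {n : ℕ} (hI : IOK μ (∑' i, ε i) r n)
    (hprev : ∀ k < n, RoundSpecAt μ ε T r k) :
    ∃ V : ℕ → ℚ, (∀ i, 0 ≤ V i) ∧ Summable (fun i => (V i : ℝ)) ∧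
      ∑' i, (V i : ℝ) < (r n).1.1 + (r n).1.2 ∧
      ∀ i x, SumRule (ε i) (simHist μ ε T (hist r n) i) (x, V i - x) := by
  cases n with
  | zero =>
    obtain ⟨V, hεV, hVs, hVlt⟩ := exists_rat_gt_of_tsum_lt hε0 hsum hI.2.2
    refine ⟨V, fun i => ?_, hVs, hVlt, fun i x => ?_⟩
    · exact_mod_cast (hε0 i).trans (hεV i).le
    · show ε i < (x : ℝ) + ((V i - x : ℚ) : ℝ)
      push_cast
      linarith [hεV i]
  | succ k =>
    obtain ⟨hmoves, hs, hlt⟩ := hprev k (Nat.lt_succ_self k)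
    rw [roundChoice_fst hr] at hs hlt
    refine ⟨fun i => pick (r k).2 ((roundChoice μ ε T (simHist μ ε T (hist r k)) (r k).1).2 i),
      fun i => ?_, hs, ?_, fun i x => ?_⟩
    · exact ((hmoves i).1.1 _).1
    · have hsel : (r (k + 1)).1.1 + (r (k + 1)).1.2 = pick (r k).2 (r k).1 := hI.2.2
      exact_mod_cast hsel ▸ hlt
    · rw [← hist_simRun, hist_succ, sumRule_concat, add_sub_cancel]
      rfl

variable {A : ℕ → Set Cantor}

lemma roundSpecAt_of_iok (hT : ∀ i r, ConsII (T i) r → IIWinsRun μ (ε i) (A i) r)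
    (hr : ConsII (combinedStrat μ ε T) r) (hε0 : ∀ i, 0 ≤ ε i) (hsum : Summable ε) {n : ℕ}
    (hI : IOK μ (∑' i, ε i) r n) (hprev : ∀ k < n, RoundSpecAt μ ε T r k) :
    RoundSpecAt μ ε T r n := by
  obtain ⟨V, hV0, hVs, hVlt, hrule⟩ := exists_simValues hr hε0 hsum hI hprev
  have hlegal := (iok_iff_isLegalMove.1 hI).1
  rw [pathOf_hist] at hlegal
  obtain ⟨b, X, hX, hXs, hXlt⟩ := exists_common_answer (M := childMass μ (path r n))
    (fun _ => ENNReal.toReal_nonneg) (fun b => (hlegal b).2.1) hV0 hVs hVlt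
    (fun i => T i (simHist μ ε T (hist r n) i)) fun i x hx => by
      rw [← hist_simRun]
      refine pick_ne_zero_of_winning (hT i) (fun k hk => (hprev k hk).consII_simRun hr i)
        (fun k hk => (hprev k hk).iok_simRun i) ?_
      rw [hist_simRun, IsLegalMove, pathOf_simHist]
      exact ⟨hx, hrule i x⟩
  refine Classical.epsilon_spec (p := RoundSpec μ ε T _ _) ⟨(b, fun i => (X i, V i - X i)),
    fun i => ⟨⟨?_, hrule i (X i)⟩, (hX i).2⟩, hXs, hXlt⟩
  rw [pathOf_simHist]
  exact (hX i).1

lemma roundSpecAt_of_forall_iok (hT : ∀ i r, ConsII (T i) r → IIWinsRun μ (ε i) (A i) r)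
    (hr : ConsII (combinedStrat μ ε T) r) (hε0 : ∀ i, 0 ≤ ε i) (hsum : Summable ε) {n : ℕ}
    (hI : ∀ k ≤ n, IOK μ (∑' i, ε i) r k) : RoundSpecAt μ ε T r n := by
  induction n using Nat.strong_induction_on with
  | _ n ih =>
    exact roundSpecAt_of_iok hT hr hε0 hsum (hI n le_rfl)
      fun k hk => ih k hk fun j hj => hI j (hj.trans hk.le)

end Combined

theorem winsII_iInter_general (μ : Measure Cantor)
    (ε : ℕ → ℝ) (A : ℕ → Set Cantor) (hε0 : ∀ n, 0 ≤ ε n)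
    (hsum : Summable ε)
    (hwin : ∀ n, WinsII μ (ε n) (A n)) :
    WinsII μ (∑' n, ε n) (⋂ n, A n) := by
  choose T hT using hwin
  refine ⟨combinedStrat μ ε T, fun r hr => iiWinsRun_of_forall_iok
    (fun n hI => (roundSpecAt_of_forall_iok hT hr hε0 hsum hI).iiok hr) fun hI => ?_⟩
  have hspec : ∀ n, RoundSpecAt μ ε T r n :=
    fun n => roundSpecAt_of_forall_iok hT hr hε0 hsum fun k _ => hI k
  exact Set.mem_iInter.2 fun i =>
    (hT i _ fun n => (hspec n).consII_simRun hr i).mem_of_forall_iok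
      fun n => (hspec n).iok_simRun i

/-- Countable additivity for the measure game: if `∑ εₙ = ε < 1` with `εₙ ≥ 0` and player II
wins each `G(εₙ, Aₙ)`, then player II wins `G(ε, ⋂ₙ Aₙ)`. -/
theorem winsII_iInter (μ : Measure Cantor) [IsProbabilityMeasure μ]
    (ε : ℕ → ℝ) (A : ℕ → Set Cantor) (hε0 : ∀ n, 0 ≤ ε n)
    (hsum : Summable ε) (hε1 : ∑' n, ε n < 1)
    (hwin : ∀ n, WinsII μ (ε n) (A n)) :
    WinsII μ (∑' n, ε n) (⋂ n, A n) :=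
  winsII_iInter_general μ ε A hε0 hsum hwin

end MeasureGame
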